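/- Let m ≥ 3 and let I be a nonempty proper subset of ZMod m that is connected in the cycle graph C_m. Then for every nontrivial rotation φ ∈ ⟨σ_1⟩ (i.e., φ = σ_k with k not divisible by m), one has φ·I ≠ I. -/

import Mathlib

open Pointwise

def cycleGraph (m : ℕ) : SimpleGraph (ZMod m) where
  Adj i j := i ≠ j ∧ (j = i + 1 ∨ i = j + 1)
  symm := ⟨fun i j h => ⟨h.1.symm, h.2.symm⟩⟩
  loopless := ⟨fun i h => h.1 rfl⟩

def IsConnSubset (m : ℕ) (I : Set (ZMod m)) : Prop :=
  ((cycleGraph m).induce I).Connected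

def IsNested (m : ℕ) (N : Set (Set (ZMod m))) : Prop :=
  N.Finite ∧
  (∀ I ∈ N, I.Nonempty ∧ I ≠ Set.univ ∧ IsConnSubset m I) ∧
  (∀ I ∈ N, ∀ J ∈ N, I ⊆ J ∨ J ⊆ I ∨ I ∩ J = ∅) ∧
  (∀ S : Finset (Set (ZMod m)), ↑S ⊆ N → 2 ≤ S.card →
    ((S : Set (Set (ZMod m))).Pairwise fun I J => I ∩ J = ∅) →
    ¬ IsConnSubset m (⋃ I ∈ S, I))

def rot (m : ℕ) : Equiv.Perm (ZMod m) := Equiv.addRight 1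

def cycRefl (m : ℕ) : Equiv.Perm (ZMod m) := Equiv.neg (ZMod m)

def dihedral (m : ℕ) : Subgroup (Equiv.Perm (ZMod m)) :=
  Subgroup.closure {rot m, cycRefl m}

def IsReflection (m : ℕ) (φ : Equiv.Perm (ZMod m)) : Prop :=
  φ ∈ dihedral m ∧ φ ∉ Subgroup.zpowers (rot m)

def nestedStab (m : ℕ) (N : Set (Set (ZMod m))) : Subgroup (Equiv.Perm (ZMod m)) :=
  dihedral m ⊓ MulAction.stabilizer (Equiv.Perm (ZMod m)) N

def rotStab (m : ℕ) (N : Set (Set (ZMod m))) : Subgroup (Equiv.Perm (ZMod m)) :=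
  Subgroup.zpowers (rot m) ⊓ nestedStab m N

noncomputable def alphaNum (m d k : ℕ) : ℕ :=
  {N : Set (Set (ZMod m)) | IsNested m N ∧ N.ncard = k ∧
    Nat.card (rotStab m N) = d ∧ ¬ ∃ φ ∈ nestedStab m N, IsReflection m φ}.ncard

noncomputable def betaNum (m d k : ℕ) : ℕ :=
  {N : Set (Set (ZMod m)) | IsNested m N ∧ N.ncard = k ∧
    Nat.card (rotStab m N) = d ∧ ∃ φ ∈ nestedStab m N, IsReflection m φ}.ncard

noncomputable def gammaNum (m d k : ℕ) : ℕ := alphaNum m d k + betaNum m d k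

/-!
A nonempty proper connected subset `I` of the cycle is an arc: it has exactly one left endpoint,
an `a ∈ I` with `a - 1 ∉ I`, since walking inside `I` from `a` only ever reaches points `a + j`
whose whole segment `a, a + 1, …, a + j` lies in `I`. A rotation by `k` fixing `I` would move that
endpoint to the left endpoint `a + k`, forcing `k ≡ 0 [ZMOD m]`.
-/

theorem SimpleGraph.Reachable.mem_of_adj_closed {V : Type*} {G : SimpleGraph V} {S : Set V}
    (hS : ∀ ⦃x y⦄, G.Adj x y → x ∈ S → y ∈ S) {u v : V} (h : G.Reachable u v) (hu : u ∈ S) :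
    v ∈ S := by
  obtain ⟨w⟩ := h
  induction w with
  | nil => exact hu
  | cons hadj _ ih => exact ih (hS hadj hu)

theorem rot_zpow_apply (m : ℕ) (k : ℤ) (x : ZMod m) : (rot m ^ k) x = x + k := by
  simp [rot, Equiv.zsmul_addRight]

theorem mem_rot_zpow_smul_iff {m : ℕ} {k : ℤ} {I : Set (ZMod m)} {x : ZMod m} :
    x ∈ (rot m ^ k) • I ↔ x - k ∈ I := by
  rw [Set.mem_smul_set_iff_inv_smul_mem, ← zpow_neg, Equiv.Perm.smul_def, rot_zpow_apply]
  push_cast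
  rw [sub_eq_add_neg]

theorem exists_mem_sub_one_notMem {m : ℕ} [NeZero m] {I : Set (ZMod m)} (hne : I.Nonempty)
    (hproper : I ≠ Set.univ) : ∃ a ∈ I, a - 1 ∉ I := by
  obtain ⟨x, hx⟩ := hne
  obtain ⟨y, hy⟩ := Set.ne_univ_iff_exists_notMem I |>.mp hproper
  by_contra! hclosed
  have hdown : ∀ n : ℕ, x - n ∈ I := by
    intro n
    induction n with
    | zero => simpa using hx
    | succ n ih => simpa [sub_sub] using hclosed _ ih
  exact hy (by simpa using hdown (x - y).val)

namespace IsConnSubset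

variable {m : ℕ} {I : Set (ZMod m)} {a : ZMod m}

theorem exists_eq_add_of_sub_one_notMem (hI : IsConnSubset m I) (ha : a ∈ I) (ha' : a - 1 ∉ I)
    {x : ZMod m} (hx : x ∈ I) : ∃ j : ℕ, x = a + j ∧ ∀ i ≤ j, a + (i : ZMod m) ∈ I := by
  let S : Set I := {y | ∃ j : ℕ, (y : ZMod m) = a + j ∧ ∀ i ≤ j, a + (i : ZMod m) ∈ I}
  have hS : ∀ ⦃y z : I⦄, ((cycleGraph m).induce I).Adj y z → y ∈ S → z ∈ S := by
    rintro ⟨y, hy⟩ ⟨z, hz⟩ hadj ⟨j, (hyj : y = a + j), hseg⟩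
    obtain ⟨-, hzy | hyz⟩ : y ≠ z ∧ (z = y + 1 ∨ y = z + 1) := by
      simpa [cycleGraph] using hadj
    · refine ⟨j + 1, by simp [hzy, hyj, add_assoc], fun i hi => ?_⟩
      obtain hi | rfl := Nat.le_succ_iff.mp hi
      · exact hseg i hi
      · simpa [hzy, hyj, add_assoc] using hz
    · obtain _ | j := j
      · exact absurd (by simpa [eq_sub_of_add_eq hyz.symm, hyj] using hz) ha'
      · exact ⟨j, by push_cast at hyj; linear_combination hyj - hyz,
          fun i hi => hseg i (hi.trans j.le_succ)⟩
  exact hI.preconnected ⟨a, ha⟩ ⟨x, hx⟩ |>.mem_of_adj_closed hS ⟨0, by simp, by simpa⟩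

theorem eq_of_sub_one_notMem (hI : IsConnSubset m I) (ha : a ∈ I) (ha' : a - 1 ∉ I)
    {b : ZMod m} (hb : b ∈ I) (hb' : b - 1 ∉ I) : b = a := by
  obtain ⟨_ | j, rfl, hseg⟩ := hI.exists_eq_add_of_sub_one_notMem ha ha' hb
  · simp
  · exact absurd (by simpa [add_sub_assoc] using hseg j j.le_succ) hb'

end IsConnSubset

theorem rotation_moves_connected_set (m : ℕ) (hm : 3 ≤ m) (I : Set (ZMod m))
    (hne : I.Nonempty) (hproper : I ≠ Set.univ) (hconn : IsConnSubset m I)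
    (k : ℤ) (hk : ¬ (m : ℤ) ∣ k) :
    ((rot m) ^ k) • I ≠ I := by
  have : NeZero m := ⟨by omega⟩
  intro hfix
  obtain ⟨a, ha, ha'⟩ := exists_mem_sub_one_notMem hne hproper
  have hb : a + k ∈ I := by rw [← hfix, mem_rot_zpow_smul_iff]; simpa
  have hb' : a + k - 1 ∉ I := by rw [← hfix, mem_rot_zpow_smul_iff]; simpa [sub_right_comm]
  have hk0 : (k : ZMod m) = 0 := by simpa using hconn.eq_of_sub_one_notMem ha ha' hb hb'
  exact hk ((ZMod.intCast_zmod_eq_zero_iff_dvd k m).mp hk0)
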